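/- The generating function of the length over final elements factors: Σ_{w ∈ F_g} q^{ℓ(w)} = Π_{i=1}^{g} (1 + q^i). -/

import Mathlib

open scoped Classical

/-- The condition defining `W_g` inside `S_{2g}` (0-indexed). -/
def Wcond (g : ℕ) (σ : Equiv.Perm (Fin (2 * g))) : Prop :=
  ∀ i : Fin (2 * g), i.val < g → (σ i).val + (σ i.rev).val = 2 * g - 1

/-- Final (Kostant) elements of `W_g`. -/
def IsFinal (g : ℕ) (σ : Equiv.Perm (Fin (2 * g))) : Prop :=
  Wcond g σ ∧ ∀ i j : Fin (2 * g), i < j → j.val < g → σ i < σ j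

/-- Length `ℓ(w) = #{i<j≤g : w(i)>w(j)} + #{i≤j≤g : w(i)+w(j)>2g+1}`
(0-indexed values, so the last condition reads `> 2g-1`); the first count
vanishes for final elements. -/
noncomputable def len (g : ℕ) (σ : Equiv.Perm (Fin (2 * g))) : ℕ :=
  Nat.card {p : Fin (2 * g) × Fin (2 * g) // p.1 < p.2 ∧ p.2.val < g ∧ σ p.2 < σ p.1}
  + Nat.card {p : Fin (2 * g) × Fin (2 * g) //
      p.1 ≤ p.2 ∧ p.2.val < g ∧ 2 * g - 1 < (σ p.1).val + (σ p.2).val}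

/-!
A final element `w` is determined by `A = w({1, …, g})`, which contains exactly one element of
each pair `{v, 2g + 1 - v}`; conversely every such `A`, listed increasingly on `{1, …, g}` and
extended by `w(2g + 1 - i) = 2g + 1 - w(i)`, is final. As `w` increases on `{1, …, g}`, `ℓ(w)`
counts the pairs `a ≤ b` in `A` with `a + b > 2g + 1`. For `b ∈ A` these are `a = b` (when
`b > g`) and the elements of `A` in the interval `[2g + 2 - b, b - 1]`, which is stable under
`v ↦ 2g + 1 - v` and so contains exactly half of them. Hence `ℓ(w) = ∑_{b ∈ A, b > g} (b - g)`,
and since `A ∩ {g + 1, …, 2g}` is an arbitrary subset, the sum over `F_g` is `∏ (1 + q^i)`.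
-/

open Finset

def IsRevTransversal {n : ℕ} (A : Finset (Fin n)) : Prop :=
  ∀ v, v.rev ∈ A ↔ v ∉ A

namespace IsRevTransversal

theorem two_mul_card_filter_mem {n : ℕ} {A : Finset (Fin n)} (hA : IsRevTransversal A)
    {J : Finset (Fin n)} (hJ : ∀ v, v.rev ∈ J ↔ v ∈ J) :
    2 * #(J.filter (· ∈ A)) = #J := by
  have hrev : (J.filter (· ∈ A)).image Fin.rev = J.filter (· ∉ A) := by
    ext v
    simp only [mem_image, mem_filter]
    constructor
    · rintro ⟨a, ⟨haJ, haA⟩, rfl⟩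
      exact ⟨(hJ a).2 haJ, fun h => (hA a).1 h haA⟩
    · rintro ⟨hvJ, hvA⟩
      exact ⟨v.rev, ⟨(hJ v).2 hvJ, (hA v).2 hvA⟩, Fin.rev_rev v⟩
  rw [← card_filter_add_card_filter_not (s := J) (· ∈ A), ← hrev,
    card_image_of_injective _ Fin.rev_injective, two_mul]

variable {g : ℕ} {A : Finset (Fin (2 * g))}

theorem card_eq (hA : IsRevTransversal A) : #A = g := by
  have := hA.two_mul_card_filter_mem (J := univ) (by simp)
  rw [filter_univ_mem, card_univ, Fintype.card_fin] at this
  omega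

theorem card_filter_le_and_le_add (hA : IsRevTransversal A) {b : Fin (2 * g)} (hb : b ∈ A) :
    #(A.filter fun a => a ≤ b ∧ 2 * g ≤ a.val + b.val) = b.val + 1 - g := by
  have hb2g := b.isLt
  by_cases hbg : b.val < g
  · rw [filter_false_of_mem fun a _ ⟨hab, hsum⟩ => by rw [Fin.le_def] at hab; omega]
    simp only [card_empty]
    omega
  set J := Ico (⟨2 * g - b.val, by omega⟩ : Fin (2 * g)) b
  have hJ : ∀ v, v.rev ∈ J ↔ v ∈ J := fun v => by
    simp only [J, mem_Ico, Fin.le_def, Fin.lt_def, Fin.val_rev]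
    omega
  have hsplit :
      (A.filter fun a => a ≤ b ∧ 2 * g ≤ a.val + b.val) = insert b (J.filter (· ∈ A)) := by
    ext a
    simp only [J, mem_filter, mem_insert, mem_Ico, Fin.le_def, Fin.lt_def, Fin.ext_iff]
    constructor
    · rintro ⟨ha, hab, hsum⟩
      rcases hab.eq_or_lt with hab | hab
      · exact Or.inl hab
      · exact Or.inr ⟨⟨by omega, hab⟩, ha⟩
    · rintro (hab | ⟨⟨hlo, hhi⟩, ha⟩)
      · exact ⟨by rwa [Fin.ext hab], by omega, by omega⟩
      · exact ⟨ha, by omega, by omega⟩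
  have hbJ : b ∉ J.filter (· ∈ A) := by simp [J]
  have hhalf : 2 * #(J.filter (· ∈ A)) = b.val - (2 * g - b.val) :=
    (hA.two_mul_card_filter_mem hJ).trans (Fin.card_Ico _ _)
  rw [hsplit, card_insert_of_notMem hbJ]
  omega

end IsRevTransversal

def lowerHalf (g : ℕ) : Finset (Fin (2 * g)) := univ.filter (·.val < g)

theorem Wcond.apply_rev {g : ℕ} {σ : Equiv.Perm (Fin (2 * g))} (hσ : Wcond g σ)
    (i : Fin (2 * g)) : σ i.rev = (σ i).rev := by
  have hi := i.isLt
  have hσi := (σ i).isLt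
  have hσri := (σ i.rev).isLt
  ext
  rw [Fin.val_rev]
  by_cases h : i.val < g
  · have := hσ i h
    omega
  · have := hσ i.rev (by rw [Fin.val_rev]; omega)
    rw [Fin.rev_rev] at this
    omega

theorem mem_image_lowerHalf {g : ℕ} {σ : Equiv.Perm (Fin (2 * g))} {v : Fin (2 * g)} :
    v ∈ (lowerHalf g).image σ ↔ (σ.symm v).val < g := by
  simp only [lowerHalf, mem_image, mem_filter, mem_univ, true_and]
  exact ⟨fun ⟨i, hi, hiv⟩ => by rwa [← hiv, Equiv.symm_apply_apply],
    fun hv => ⟨σ.symm v, hv, σ.apply_symm_apply v⟩⟩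

theorem Wcond.isRevTransversal_image_lowerHalf {g : ℕ} {σ : Equiv.Perm (Fin (2 * g))}
    (hσ : Wcond g σ) : IsRevTransversal ((lowerHalf g).image σ) := by
  intro v
  have hsymm : σ.symm v.rev = (σ.symm v).rev := by
    rw [Equiv.symm_apply_eq, hσ.apply_rev, Equiv.apply_symm_apply]
  have := (σ.symm v).isLt
  rw [mem_image_lowerHalf, mem_image_lowerHalf, hsymm, Fin.val_rev]
  omega

namespace IsRevTransversal

variable {g : ℕ} {A : Finset (Fin (2 * g))}

noncomputable def toPermFun (hA : IsRevTransversal A) (i : Fin (2 * g)) : Fin (2 * g) :=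
  if hi : i.val < g then A.orderEmbOfFin hA.card_eq ⟨i, hi⟩
  else (A.orderEmbOfFin hA.card_eq ⟨i.rev, by rw [Fin.val_rev]; omega⟩).rev

theorem toPermFun_of_lt (hA : IsRevTransversal A) {i : Fin (2 * g)} (hi : i.val < g) :
    hA.toPermFun i = A.orderEmbOfFin hA.card_eq ⟨i, hi⟩ :=
  dif_pos hi

theorem toPermFun_rev (hA : IsRevTransversal A) (i : Fin (2 * g)) :
    hA.toPermFun i.rev = (hA.toPermFun i).rev := by
  have := i.isLt
  by_cases hi : i.val < g
  · rw [toPermFun, dif_neg (by rw [Fin.val_rev]; omega), toPermFun_of_lt hA hi]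
    simp only [Fin.rev_rev]
  · rw [toPermFun_of_lt hA (by rw [Fin.val_rev]; omega), toPermFun, dif_neg hi, Fin.rev_rev]

theorem toPermFun_mem_iff (hA : IsRevTransversal A) (i : Fin (2 * g)) :
    hA.toPermFun i ∈ A ↔ i.val < g := by
  by_cases hi : i.val < g
  · simp only [hi, toPermFun_of_lt hA hi, orderEmbOfFin_mem]
  · rw [toPermFun, dif_neg hi, hA]
    simp [hi]

theorem toPermFun_injective (hA : IsRevTransversal A) : Function.Injective hA.toPermFun := by
  intro i j hij
  have hlt : i.val < g ↔ j.val < g := by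
    rw [← toPermFun_mem_iff hA, ← toPermFun_mem_iff hA, hij]
  have hemb := (A.orderEmbOfFin hA.card_eq).injective
  by_cases hi : i.val < g
  · rw [toPermFun_of_lt hA hi, toPermFun_of_lt hA (hlt.1 hi)] at hij
    simpa [Fin.ext_iff] using hemb hij
  · rw [toPermFun, toPermFun, dif_neg hi, dif_neg (hlt.not.1 hi), Fin.rev_inj] at hij
    have := hemb hij
    simp only [Fin.mk.injEq, Fin.val_rev] at this
    omega

noncomputable def toPerm (hA : IsRevTransversal A) : Equiv.Perm (Fin (2 * g)) :=
  Equiv.ofBijective _ (Finite.injective_iff_bijective.mp hA.toPermFun_injective)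

theorem isFinal_toPerm (hA : IsRevTransversal A) : IsFinal g hA.toPerm := by
  refine ⟨fun i _ => ?_, fun i j hij hj => ?_⟩
  · have := (hA.toPermFun i).isLt
    simp only [toPerm, Equiv.ofBijective_apply, toPermFun_rev, Fin.val_rev]
    omega
  · simp only [toPerm, Equiv.ofBijective_apply, toPermFun_of_lt hA hj,
      toPermFun_of_lt hA ((Fin.lt_def.1 hij).trans hj)]
    exact (A.orderEmbOfFin hA.card_eq).strictMono (Fin.mk_lt_mk.2 hij)

theorem image_lowerHalf_toPerm (hA : IsRevTransversal A) :
    (lowerHalf g).image hA.toPerm = A := by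
  ext v
  simp only [lowerHalf, mem_image, mem_filter, mem_univ, true_and, toPerm,
    Equiv.ofBijective_apply]
  constructor
  · rintro ⟨i, hi, rfl⟩
    exact (toPermFun_mem_iff hA i).2 hi
  · intro hv
    obtain ⟨j, rfl⟩ : v ∈ Set.range (A.orderEmbOfFin hA.card_eq) := by simpa using hv
    have hj : j.val < g := j.isLt
    exact ⟨⟨j, by omega⟩, hj, toPermFun_of_lt hA hj⟩

end IsRevTransversal

theorem IsFinal.toPerm_eq {g : ℕ} {σ : Equiv.Perm (Fin (2 * g))} (hσ : IsFinal g σ) :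
    hσ.1.isRevTransversal_image_lowerHalf.toPerm = σ := by
  set hA := hσ.1.isRevTransversal_image_lowerHalf
  have hlower : ∀ i : Fin (2 * g), i.val < g → hA.toPerm i = σ i := by
    have hσA : (fun j : Fin g => σ ⟨j, by omega⟩) =
        ((lowerHalf g).image σ).orderEmbOfFin hA.card_eq := by
      refine orderEmbOfFin_unique _ (fun j => ?_) fun j k hjk => hσ.2 _ _ hjk k.isLt
      simp [lowerHalf]
    intro i hi
    simp only [IsRevTransversal.toPerm, Equiv.ofBijective_apply,
      IsRevTransversal.toPermFun_of_lt hA hi, ← hσA]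
  ext i
  by_cases hi : i.val < g
  · rw [hlower i hi]
  · have hri : i.rev.val < g := by rw [Fin.val_rev]; omega
    have := hA.toPermFun_rev i.rev
    simp only [Fin.rev_rev] at this
    simp only [IsRevTransversal.toPerm, Equiv.ofBijective_apply] at hlower ⊢
    rw [this, hlower _ hri, ← hσ.1.apply_rev, Fin.rev_rev]

namespace IsFinal

variable {g : ℕ} {σ : Equiv.Perm (Fin (2 * g))}

theorem apply_le_apply_iff (hσ : IsFinal g σ) {i j : Fin (2 * g)} (hi : i.val < g)
    (hj : j.val < g) : σ i ≤ σ j ↔ i ≤ j :=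
  StrictMonoOn.le_iff_le (s := {i : Fin (2 * g) | i.val < g})
    (fun _ _ _ hb hab => hσ.2 _ _ hab hb) hi hj

-- With 0-indexed values, `b + 1 - g` is the paper's `b - g` for `b` above the middle and
-- truncates to `0` below it.
theorem len_eq (hσ : IsFinal g σ) :
    len g σ = ∑ b ∈ (lowerHalf g).image σ, (b.val + 1 - g) := by
  set A := (lowerHalf g).image σ
  have hA := hσ.1.isRevTransversal_image_lowerHalf
  have hinv : Nat.card {p : Fin (2 * g) × Fin (2 * g) // p.1 < p.2 ∧ p.2.val < g ∧ σ p.2 < σ p.1}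
      = 0 :=
    Nat.card_eq_zero.2 <| .inl ⟨fun ⟨_, hlt, hp2, hσp⟩ => (hσ.2 _ _ hlt hp2).asymm hσp⟩
  have hpairs : Nat.card {p : Fin (2 * g) × Fin (2 * g) //
      p.1 ≤ p.2 ∧ p.2.val < g ∧ 2 * g - 1 < (σ p.1).val + (σ p.2).val}
      = #((A ×ˢ A).filter fun q => q.1 ≤ q.2 ∧ 2 * g ≤ q.1.val + q.2.val) := by
    rw [Nat.card_eq_fintype_card, Fintype.card_subtype]
    refine card_nbij' (fun p => (σ p.1, σ p.2)) (fun q => (σ.symm q.1, σ.symm q.2)) ?_ ?_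
      (fun _ _ => by simp) (fun _ _ => by simp)
    · rintro ⟨i, j⟩ hp
      simp only [coe_filter, mem_univ, true_and, Set.mem_ofPred_eq, A, mem_product,
        mem_image_lowerHalf, Equiv.symm_apply_apply] at hp ⊢
      obtain ⟨hij, hj, hsum⟩ := hp
      have hi : i.val < g := lt_of_le_of_lt hij hj
      exact ⟨⟨hi, hj⟩, (hσ.apply_le_apply_iff hi hj).2 hij, by omega⟩
    · rintro ⟨a, b⟩ hq
      simp only [coe_filter, mem_univ, true_and, Set.mem_ofPred_eq, A, mem_product,
        mem_image_lowerHalf, Equiv.apply_symm_apply] at hq ⊢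
      obtain ⟨⟨ha, hb⟩, hab, hsum⟩ := hq
      refine ⟨?_, hb, by omega⟩
      rwa [← hσ.apply_le_apply_iff ha hb, Equiv.apply_symm_apply, Equiv.apply_symm_apply]
  rw [len, hinv, hpairs, zero_add, card_filter, sum_product_right]
  refine sum_congr rfl fun b hb => ?_
  rw [← hA.card_filter_le_and_le_add hb, card_filter]

end IsFinal

theorem sum_isFinal_eq_sum_isRevTransversal {M : Type*} [AddCommMonoid M] (g : ℕ)
    (f : ℕ → M) :
    ∑ σ ∈ univ.filter (IsFinal g), f (len g σ)
      = ∑ A ∈ univ.filter (IsRevTransversal (n := 2 * g)), f (∑ b ∈ A, (b.val + 1 - g)) := by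
  refine sum_bij' (fun σ _ => (lowerHalf g).image σ)
    (fun A hA => (mem_filter.1 hA).2.toPerm) (fun σ hσ => ?_) (fun A hA => ?_)
    (fun σ hσ => (mem_filter.1 hσ).2.toPerm_eq) (fun A hA => ?_) (fun σ hσ => ?_)
  · exact mem_filter.2 ⟨mem_univ _, (mem_filter.1 hσ).2.1.isRevTransversal_image_lowerHalf⟩
  · exact mem_filter.2 ⟨mem_univ _, (mem_filter.1 hA).2.isFinal_toPerm⟩
  · exact (mem_filter.1 hA).2.image_lowerHalf_toPerm
  · rw [(mem_filter.1 hσ).2.len_eq]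

def upperHalf (g : ℕ) : Finset (Fin (2 * g)) := univ.filter (g ≤ ·.val)

theorem mem_upperHalf {g : ℕ} {v : Fin (2 * g)} : v ∈ upperHalf g ↔ g ≤ v.val := by
  simp [upperHalf]

def revExtend (g : ℕ) (B : Finset (Fin (2 * g))) : Finset (Fin (2 * g)) :=
  univ.filter fun v => if g ≤ v.val then v ∈ B else v.rev ∉ B

theorem isRevTransversal_revExtend {g : ℕ} (B : Finset (Fin (2 * g))) :
    IsRevTransversal (revExtend g B) := by
  intro v
  have := v.isLt
  by_cases hv : g ≤ v.val
  · simp [revExtend, hv, Fin.val_rev, show ¬ g ≤ 2 * g - (v.val + 1) by omega]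
  · simp [revExtend, hv, Fin.val_rev, show g ≤ 2 * g - (v.val + 1) by omega]

theorem revExtend_inter_upperHalf {g : ℕ} {B : Finset (Fin (2 * g))} (hB : B ⊆ upperHalf g) :
    revExtend g B ∩ upperHalf g = B := by
  ext v
  simp only [revExtend, mem_inter, mem_filter, mem_univ, true_and, mem_upperHalf]
  by_cases hv : g ≤ v.val
  · simp [hv]
  · simp only [hv, and_false, false_iff]
    exact fun hvB => hv (mem_upperHalf.1 (hB hvB))

theorem IsRevTransversal.revExtend_inter_upperHalf {g : ℕ} {A : Finset (Fin (2 * g))}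
    (hA : IsRevTransversal A) : revExtend g (A ∩ upperHalf g) = A := by
  ext v
  have := v.isLt
  simp only [revExtend, mem_inter, mem_filter, mem_univ, true_and, mem_upperHalf, Fin.val_rev]
  by_cases hv : g ≤ v.val
  · simp [hv]
  · simp [hv, hA v, show g ≤ 2 * g - (v.val + 1) by omega]

theorem sum_inter_upperHalf {g : ℕ} (A : Finset (Fin (2 * g))) :
    ∑ b ∈ A ∩ upperHalf g, (b.val + 1 - g) = ∑ b ∈ A, (b.val + 1 - g) := by
  refine sum_subset inter_subset_left fun b hbA hb => ?_
  simp only [mem_inter, hbA, true_and, mem_upperHalf] at hb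
  omega

theorem sum_isRevTransversal_eq_sum_powerset_upperHalf {M : Type*} [AddCommMonoid M] (g : ℕ)
    (f : ℕ → M) :
    ∑ A ∈ univ.filter (IsRevTransversal (n := 2 * g)), f (∑ b ∈ A, (b.val + 1 - g))
      = ∑ B ∈ (upperHalf g).powerset, f (∑ b ∈ B, (b.val + 1 - g)) := by
  refine sum_nbij' (· ∩ upperHalf g) (revExtend g) (fun A _ => ?_) (fun B _ => ?_)
    (fun A hA => ?_) (fun B hB => ?_) (fun A _ => ?_)
  · simp
  · simp [isRevTransversal_revExtend]
  · exact (mem_filter.1 hA).2.revExtend_inter_upperHalf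
  · exact revExtend_inter_upperHalf (mem_powerset.1 hB)
  · rw [sum_inter_upperHalf]

theorem prod_upperHalf {M : Type*} [CommMonoid M] (g : ℕ) (f : ℕ → M) :
    ∏ b ∈ upperHalf g, f (b.val - g) = ∏ i ∈ range g, f i := by
  refine prod_bij' (fun b _ => b.val - g) (fun i hi => ⟨g + i, by rw [mem_range] at hi; omega⟩)
    (fun b _ => mem_range.2 (by omega)) (fun i _ => mem_upperHalf.2 (Nat.le_add_right g i))
    (fun b hb => Fin.ext (by rw [mem_upperHalf] at hb; simp only; omega))
    (fun i _ => Nat.add_sub_cancel_left g i) (fun _ _ => rfl)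

theorem final_length_generating_function_general (g : ℕ) :
    ∑ σ ∈ Finset.univ.filter (fun σ : Equiv.Perm (Fin (2 * g)) => IsFinal g σ),
        (Polynomial.X : Polynomial ℤ) ^ (len g σ)
      = ∏ i ∈ Finset.range g, (1 + (Polynomial.X : Polynomial ℤ) ^ (i + 1)) := by
  open Polynomial in
  calc ∑ σ ∈ univ.filter (IsFinal g), (X : ℤ[X]) ^ len g σ
      = ∑ B ∈ (upperHalf g).powerset, (X : ℤ[X]) ^ ∑ b ∈ B, (b.val + 1 - g) := by
        rw [sum_isFinal_eq_sum_isRevTransversal, sum_isRevTransversal_eq_sum_powerset_upperHalf]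
    _ = ∏ b ∈ upperHalf g, (1 + X ^ (b.val + 1 - g)) := by
        simp only [prod_one_add, prod_pow_eq_pow_sum]
    _ = ∏ b ∈ upperHalf g, (1 + X ^ (b.val - g + 1)) :=
        prod_congr rfl fun b hb => by rw [Nat.sub_add_comm (mem_upperHalf.1 hb)]
    _ = ∏ i ∈ range g, (1 + X ^ (i + 1)) := prod_upperHalf g (fun i => 1 + X ^ (i + 1))

/-- `Σ_{w ∈ F_g} q^{ℓ(w)} = Π_{i=1}^{g} (1 + q^i)` in `ℤ[q]`. -/
theorem final_length_generating_function (g : ℕ) (hg : 0 < g) :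
    ∑ σ ∈ Finset.univ.filter (fun σ : Equiv.Perm (Fin (2 * g)) => IsFinal g σ),
        (Polynomial.X : Polynomial ℤ) ^ (len g σ)
      = ∏ i ∈ Finset.range g, (1 + (Polynomial.X : Polynomial ℤ) ^ (i + 1)) :=
  final_length_generating_function_general g
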